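/- arXiv:2511.20877 — 2 statements merged into one kernel-verified Lean document; each statement's English description precedes it below -/
import Mathlib

section
/- Let $\mathbf{e}_k = \mathbf{Y}_k \mathbf{e}_{k-1}$ where $\mathbf{Y}_1, \dots, \mathbf{Y}_k$ are i.i.d. random $n \times n$ real matrices distributed as $\mathbf{Y}$, independent of the deterministic initial vector $\mathbf{e}_0 \in \mathbb{R}^n$. Then $\mathbb{E}\|\mathbf{e}_k\|^2 \ge \lambda_{\min}(\mathbb{E}[\mathbf{Y}^\top \mathbf{Y}])^k \cdot \|\mathbf{e}_0\|^2$, where $\lambda_{\min}$ denotes the smallest eigenvalue of the positive semidefinite matrix $\mathbb{E}[\mathbf{Y}^\top\mathbf{Y}]$. -/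
open MeasureTheory ProbabilityTheory Matrix Metric
open scoped Kronecker

instance matMS {ι κ : Type*} : MeasurableSpace (Matrix ι κ ℝ) :=
  inferInstanceAs (MeasurableSpace (ι → κ → ℝ))

/-- Operator norm (ℓ² → ℓ²) of a square real matrix. -/
noncomputable def opNorm {ι : Type*} [Fintype ι] [DecidableEq ι] (M : Matrix ι ι ℝ) : ℝ :=
  ‖Matrix.toEuclideanCLM (𝕜 := ℝ) M‖

/-- Entrywise expectation of a random matrix. -/
noncomputable def Emat {Ω : Type*} [MeasurableSpace Ω] (μ : Measure Ω)
    {ι κ : Type*} (X : Ω → Matrix ι κ ℝ) : Matrix ι κ ℝ :=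
  Matrix.of fun i j => ∫ ω, X ω i j ∂μ

/-- A square real matrix acting on Euclidean space. -/
noncomputable def matCLM {n : ℕ} (M : Matrix (Fin n) (Fin n) ℝ) :
    EuclideanSpace ℝ (Fin n) →L[ℝ] EuclideanSpace ℝ (Fin n) :=
  Matrix.toEuclideanCLM (𝕜 := ℝ) M

/-! Since `e (j - 1)` is a function of `Y 1, …, Y (j - 1)`, it is independent of `Y j`.
Integrating first over `Y j` therefore gives
`𝔼‖Y_j e_{j-1}‖² = 𝔼⟪𝔼[YᵀY] e_{j-1}, e_{j-1}⟫ ≥ λ_min 𝔼‖e_{j-1}‖²`, the inequality being the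
Rayleigh bound in an eigenbasis of `𝔼[YᵀY]`; moreover `λ_min ≥ 0` since `𝔼[YᵀY]` is positive
semidefinite. Iterating `k` times gives the claim. The iteration is carried out for lower Lebesgue
integrals, so that no integrability of the intermediate iterates is needed. -/

open scoped RealInnerProductSpace ENNReal

section MatrixAction

variable {n : ℕ}

lemma matCLM_apply (M : Matrix (Fin n) (Fin n) ℝ) (x : EuclideanSpace ℝ (Fin n)) (i : Fin n) :
    matCLM M x i = ∑ j, M i j * x j := rfl

lemma matCLM_mul (M N : Matrix (Fin n) (Fin n) ℝ) (x : EuclideanSpace ℝ (Fin n)) :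
    matCLM (M * N) x = matCLM M (matCLM N x) := by
  simp [matCLM]

lemma inner_matCLM_left (M : Matrix (Fin n) (Fin n) ℝ) (x y : EuclideanSpace ℝ (Fin n)) :
    ⟪matCLM M x, y⟫ = ⟪x, matCLM Mᵀ y⟫ := by
  have h := Matrix.toEuclideanLin_conjTranspose_eq_adjoint M
  rw [conjTranspose_eq_transpose_of_trivial] at h
  change ⟪toEuclideanLin M x, y⟫ = ⟪x, toEuclideanLin Mᵀ y⟫
  rw [h, LinearMap.adjoint_inner_right]

lemma norm_matCLM_sq (M : Matrix (Fin n) (Fin n) ℝ) (w : EuclideanSpace ℝ (Fin n)) :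
    ‖matCLM M w‖ ^ 2 = ⟪matCLM (Mᵀ * M) w, w⟫ := by
  rw [← real_inner_self_eq_norm_sq, inner_matCLM_left, matCLM_mul, real_inner_comm]

lemma inner_matCLM_transpose_mul_self_nonneg (M : Matrix (Fin n) (Fin n) ℝ)
    (w : EuclideanSpace ℝ (Fin n)) : 0 ≤ ⟪matCLM (Mᵀ * M) w, w⟫ :=
  norm_matCLM_sq M w ▸ sq_nonneg _

lemma inner_matCLM_self (A : Matrix (Fin n) (Fin n) ℝ) (w : EuclideanSpace ℝ (Fin n)) :
    ⟪matCLM A w, w⟫ = ∑ i, ∑ j, w i * A i j * w j := by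
  simp only [PiLp.inner_apply, matCLM_apply, RCLike.inner_apply, conj_trivial, Finset.mul_sum]
  exact Finset.sum_congr rfl fun i _ => Finset.sum_congr rfl fun j _ => by ring

lemma Measurable.matCLM_apply {α : Type*} {_ : MeasurableSpace α}
    {M : α → Matrix (Fin n) (Fin n) ℝ} {x : α → EuclideanSpace ℝ (Fin n)} (hM : Measurable M)
    (hx : Measurable x) :
    Measurable fun a => matCLM (M a) (x a) := by
  have h : (fun a => matCLM (M a) (x a)) = fun a => WithLp.toLp 2 fun i => ∑ j, M a i j * x a j :=
    rfl
  rw [h]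
  refine (WithLp.measurable_toLp 2 _).comp (measurable_pi_lambda _ fun i => ?_)
  exact Finset.measurable_sum _ fun j _ =>
    (measurable_pi_iff.mp (measurable_pi_iff.mp hM i) j).mul
      (measurable_pi_iff.mp ((WithLp.measurable_ofLp 2 _).comp hx) j)

end MatrixAction

namespace Matrix.IsHermitian

variable {n : ℕ} {A : Matrix (Fin n) (Fin n) ℝ}

lemma matCLM_eigenvectorBasis (hA : A.IsHermitian) (i : Fin n) :
    matCLM A (hA.eigenvectorBasis i) = hA.eigenvalues i • hA.eigenvectorBasis i := by
  ext j
  simpa [matCLM] using congrFun (hA.mulVec_eigenvectorBasis i) j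

lemma eigenvalues_eq_inner_matCLM (hA : A.IsHermitian) (i : Fin n) :
    hA.eigenvalues i = ⟪matCLM A (hA.eigenvectorBasis i), hA.eigenvectorBasis i⟫ := by
  rw [matCLM_eigenvectorBasis, real_inner_smul_left, real_inner_self_eq_norm_sq,
    hA.eigenvectorBasis.orthonormal.1 i, one_pow, mul_one]

lemma iInf_eigenvalues_mul_norm_sq_le (hA : A.IsHermitian) (w : EuclideanSpace ℝ (Fin n)) :
    (⨅ i, hA.eigenvalues i) * ‖w‖ ^ 2 ≤ ⟪matCLM A w, w⟫ := by
  set b := hA.eigenvectorBasis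
  have hAt : Aᵀ = A := by rw [← conjTranspose_eq_transpose_of_trivial]; exact hA
  have hb : ∀ i, ⟪matCLM A w, b i⟫ = hA.eigenvalues i * ⟪b i, w⟫ := fun i => by
    rw [inner_matCLM_left, hAt, matCLM_eigenvectorBasis, real_inner_smul_right, real_inner_comm]
  rw [← real_inner_self_eq_norm_sq, ← b.sum_inner_mul_inner, ← b.sum_inner_mul_inner,
    Finset.mul_sum]
  refine Finset.sum_le_sum fun i _ => ?_
  rw [hb, real_inner_comm w, mul_assoc]
  exact mul_le_mul_of_nonneg_right (ciInf_le (Finite.bddBelow_range _) i) (mul_self_nonneg _)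

end Matrix.IsHermitian

section Expectation

variable {Ω : Type*} [MeasurableSpace Ω] {μ : Measure Ω} {n : ℕ}

lemma integrable_inner_matCLM_self {A : Ω → Matrix (Fin n) (Fin n) ℝ}
    (hA : ∀ i j, Integrable (fun ω => A ω i j) μ) (w : EuclideanSpace ℝ (Fin n)) :
    Integrable (fun ω => ⟪matCLM (A ω) w, w⟫) μ := by
  simp_rw [inner_matCLM_self]
  exact integrable_finsetSum _ fun i _ => integrable_finsetSum _ fun j _ =>
    ((hA i j).const_mul _).mul_const _

lemma integral_inner_matCLM_self {A : Ω → Matrix (Fin n) (Fin n) ℝ}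
    (hA : ∀ i j, Integrable (fun ω => A ω i j) μ) (w : EuclideanSpace ℝ (Fin n)) :
    ∫ ω, ⟪matCLM (A ω) w, w⟫ ∂μ = ⟪matCLM (Emat μ A) w, w⟫ := by
  have hA' : ∀ i j, Integrable (fun ω => w i * A ω i j * w j) μ := fun i j =>
    ((hA i j).const_mul _).mul_const _
  simp_rw [inner_matCLM_self]
  rw [integral_finsetSum _ fun i _ => integrable_finsetSum _ fun j _ => hA' i j]
  refine Finset.sum_congr rfl fun i _ => ?_
  rw [integral_finsetSum _ fun j _ => hA' i j]
  refine Finset.sum_congr rfl fun j _ => ?_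
  rw [integral_mul_const, integral_const_mul]
  rfl

lemma iInf_eigenvalues_nonneg {Z : Ω → Matrix (Fin n) (Fin n) ℝ}
    (hint : ∀ i j, Integrable (fun ω => ((Z ω)ᵀ * Z ω) i j) μ)
    (hherm : (Emat μ fun ω => (Z ω)ᵀ * Z ω).IsHermitian) :
    0 ≤ ⨅ i, hherm.eigenvalues i := by
  refine Real.iInf_nonneg fun i => ?_
  rw [hherm.eigenvalues_eq_inner_matCLM, ← integral_inner_matCLM_self hint]
  exact integral_nonneg fun ω => inner_matCLM_transpose_mul_self_nonneg _ _

lemma ofReal_iInf_eigenvalues_mul_le_lintegral {Z : Ω → Matrix (Fin n) (Fin n) ℝ}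
    (hint : ∀ i j, Integrable (fun ω => ((Z ω)ᵀ * Z ω) i j) μ)
    (hherm : (Emat μ fun ω => (Z ω)ᵀ * Z ω).IsHermitian) (w : EuclideanSpace ℝ (Fin n)) :
    ENNReal.ofReal (⨅ i, hherm.eigenvalues i) * ENNReal.ofReal (‖w‖ ^ 2) ≤
      ∫⁻ ω, ENNReal.ofReal (‖matCLM (Z ω) w‖ ^ 2) ∂μ := by
  simp_rw [norm_matCLM_sq]
  rw [← ofReal_integral_eq_lintegral_ofReal (integrable_inner_matCLM_self hint w)
    (ae_of_all _ fun ω => inner_matCLM_transpose_mul_self_nonneg _ w), ← ENNReal.ofReal_mul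
    (iInf_eigenvalues_nonneg hint hherm), integral_inner_matCLM_self hint]
  exact ENNReal.ofReal_le_ofReal (hherm.iInf_eigenvalues_mul_norm_sq_le w)

end Expectation

section Independence

variable {Ω : Type*} {mΩ : MeasurableSpace Ω} {μ : Measure Ω}

lemma ProbabilityTheory.iIndepFun.indepFun_of_measurable_iSup {ι β γ : Type*}
    [mβ : MeasurableSpace β] [MeasurableSpace γ] {Y : ι → Ω → β} (hY : ∀ i, Measurable (Y i))
    (hindep : iIndepFun Y μ) {S : Set ι} {j : ι} (hj : j ∉ S) {X : Ω → γ}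
    (hX : Measurable[⨆ i ∈ S, mβ.comap (Y i)] X) :
    IndepFun X (Y j) μ := by
  have h := indep_iSup_of_disjoint (fun i => (hY i).comap_le) hindep.iIndep
    (Set.disjoint_singleton_right.mpr hj)
  rw [IndepFun_iff_Indep]
  refine indep_of_indep_of_le_right (indep_of_indep_of_le_left h hX.comap_le) ?_
  exact le_iSup₂_of_le j (Set.mem_singleton j) le_rfl

lemma ProbabilityTheory.IndepFun.lintegral_comp_eq_lintegral_lintegral [IsFiniteMeasure μ]
    {α β : Type*} [MeasurableSpace α] [MeasurableSpace β] {X : Ω → α} {Z : Ω → β}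
    (hXZ : IndepFun X Z μ) (hX : Measurable X) (hZ : Measurable Z) {f : α × β → ℝ≥0∞}
    (hf : Measurable f) :
    ∫⁻ ω, f (X ω, Z ω) ∂μ = ∫⁻ x, ∫⁻ z, f (x, z) ∂(μ.map Z) ∂(μ.map X) := by
  rw [← lintegral_prod f hf.aemeasurable, ← hXZ.map_prod_eq_prod_map_map hX.aemeasurable
    hZ.aemeasurable, lintegral_map hf (hX.prodMk hZ)]

end Independence

section RandomMatrixProducts

variable {Ω : Type*} {mΩ : MeasurableSpace Ω} {μ : Measure Ω} {n : ℕ}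

lemma mul_lintegral_norm_sq_le_of_indepFun [IsFiniteMeasure μ]
    {X : Ω → EuclideanSpace ℝ (Fin n)} {Z : Ω → Matrix (Fin n) (Fin n) ℝ} (hX : Measurable X)
    (hZ : Measurable Z) (hXZ : IndepFun X Z μ) {c : ℝ≥0∞}
    (hc : ∀ w, c * ENNReal.ofReal (‖w‖ ^ 2) ≤
      ∫⁻ M, ENNReal.ofReal (‖matCLM M w‖ ^ 2) ∂(μ.map Z)) :
    c * ∫⁻ ω, ENNReal.ofReal (‖X ω‖ ^ 2) ∂μ ≤
      ∫⁻ ω, ENNReal.ofReal (‖matCLM (Z ω) (X ω)‖ ^ 2) ∂μ := by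
  have hnorm : Measurable fun x : EuclideanSpace ℝ (Fin n) => ENNReal.ofReal (‖x‖ ^ 2) :=
    (measurable_norm.pow_const 2).ennreal_ofReal
  calc c * ∫⁻ ω, ENNReal.ofReal (‖X ω‖ ^ 2) ∂μ
      = ∫⁻ x, c * ENNReal.ofReal (‖x‖ ^ 2) ∂(μ.map X) := by
        rw [lintegral_const_mul _ hnorm, lintegral_map hnorm hX]
    _ ≤ ∫⁻ x, ∫⁻ M, ENNReal.ofReal (‖matCLM M x‖ ^ 2) ∂(μ.map Z) ∂(μ.map X) :=
        lintegral_mono hc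
    _ = ∫⁻ ω, ENNReal.ofReal (‖matCLM (Z ω) (X ω)‖ ^ 2) ∂μ :=
        (hXZ.lintegral_comp_eq_lintegral_lintegral hX hZ
          (hnorm.comp (measurable_snd.matCLM_apply measurable_fst))).symm

variable {Y : ℕ → Ω → Matrix (Fin n) (Fin n) ℝ} {k : ℕ} {e₀ : EuclideanSpace ℝ (Fin n)}
  {e : ℕ → Ω → EuclideanSpace ℝ (Fin n)}

lemma measurable_iSup_comap_of_rec (he0 : ∀ ω, e 0 ω = e₀)
    (herec : ∀ ω, ∀ j, 1 ≤ j → j ≤ k → e j ω = matCLM (Y j ω) (e (j - 1) ω))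
    {j : ℕ} (hj : j ≤ k) :
    Measurable[⨆ i ∈ Set.Iic j, matMS.comap (Y i)] (e j) := by
  induction j with
  | zero => rw [funext he0]; exact measurable_const
  | succ j ih =>
    have hY : Measurable[⨆ i ∈ Set.Iic (j + 1), matMS.comap (Y i)] (Y (j + 1)) :=
      measurable_iff_comap_le.mpr (le_iSup₂_of_le (j + 1) (Set.mem_Iic.mpr le_rfl) le_rfl)
    have he : Measurable[⨆ i ∈ Set.Iic (j + 1), matMS.comap (Y i)] (e j) :=
      (ih (by omega)).mono (biSup_mono fun i hi => Set.Iic_subset_Iic.mpr j.le_succ hi) le_rfl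
    have hrec : e (j + 1) = fun ω => matCLM (Y (j + 1) ω) (e j ω) :=
      funext fun ω => herec ω (j + 1) (by omega) hj
    rw [hrec]
    exact hY.matCLM_apply he

lemma pow_mul_le_lintegral_norm_sq_of_rec [IsProbabilityMeasure μ]
    (hY : ∀ j, Measurable (Y j)) (hindep : iIndepFun Y μ) (hident : ∀ j, μ.map (Y j) = μ.map (Y 1))
    {c : ℝ≥0∞} (hc : ∀ w, c * ENNReal.ofReal (‖w‖ ^ 2) ≤
      ∫⁻ ω, ENNReal.ofReal (‖matCLM (Y 1 ω) w‖ ^ 2) ∂μ)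
    (he0 : ∀ ω, e 0 ω = e₀)
    (herec : ∀ ω, ∀ j, 1 ≤ j → j ≤ k → e j ω = matCLM (Y j ω) (e (j - 1) ω))
    {j : ℕ} (hj : j ≤ k) :
    c ^ j * ENNReal.ofReal (‖e₀‖ ^ 2) ≤ ∫⁻ ω, ENNReal.ofReal (‖e j ω‖ ^ 2) ∂μ := by
  induction j with
  | zero => simp [he0]
  | succ j ih =>
    have he : Measurable[⨆ i ∈ Set.Iic j, matMS.comap (Y i)] (e j) :=
      measurable_iSup_comap_of_rec he0 herec (by omega)
    have hlaw : ∀ w, c * ENNReal.ofReal (‖w‖ ^ 2) ≤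
        ∫⁻ M, ENNReal.ofReal (‖matCLM M w‖ ^ 2) ∂(μ.map (Y (j + 1))) := fun w => by
      have hf : Measurable fun M : Matrix (Fin n) (Fin n) ℝ =>
          ENNReal.ofReal (‖matCLM M w‖ ^ 2) :=
        ((measurable_id.matCLM_apply measurable_const).norm.pow_const 2).ennreal_ofReal
      rw [hident, lintegral_map hf (hY 1)]
      exact hc w
    calc c ^ (j + 1) * ENNReal.ofReal (‖e₀‖ ^ 2)
        = c * (c ^ j * ENNReal.ofReal (‖e₀‖ ^ 2)) := by ring
      _ ≤ c * ∫⁻ ω, ENNReal.ofReal (‖e j ω‖ ^ 2) ∂μ := by gcongr; exact ih (by omega)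
      _ ≤ ∫⁻ ω, ENNReal.ofReal (‖matCLM (Y (j + 1) ω) (e j ω)‖ ^ 2) ∂μ :=
        mul_lintegral_norm_sq_le_of_indepFun
          (he.mono (iSup₂_le fun i _ => (hY i).comap_le) le_rfl) (hY (j + 1))
          (hindep.indepFun_of_measurable_iSup hY (by simp) he) hlaw
      _ = ∫⁻ ω, ENNReal.ofReal (‖e (j + 1) ω‖ ^ 2) ∂μ := by
        simp_rw [herec _ (j + 1) (by omega) hj, Nat.add_sub_cancel]

end RandomMatrixProducts

/-- Expected-error lower bound for linear stochastic iterative methods: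
`𝔼‖e_k‖² ≥ λ_min(𝔼[Yᵀ Y])ᵏ ‖e₀‖²`. -/
theorem stmt2 {Ω : Type*} [MeasurableSpace Ω] (μ : Measure Ω) [IsProbabilityMeasure μ]
    {n : ℕ} (k : ℕ) (Y : ℕ → Ω → Matrix (Fin n) (Fin n) ℝ)
    (hmeas : ∀ j, Measurable (Y j))
    (hindep : iIndepFun Y μ)
    (hident : ∀ j, μ.map (Y j) = μ.map (Y 1))
    (hint : ∀ i j, Integrable (fun ω => ((Y 1 ω)ᵀ * Y 1 ω) i j) μ)
    (hherm : (Emat μ fun ω => (Y 1 ω)ᵀ * Y 1 ω).IsHermitian)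
    (e₀ : EuclideanSpace ℝ (Fin n)) (e : ℕ → Ω → EuclideanSpace ℝ (Fin n))
    (he0 : ∀ ω, e 0 ω = e₀)
    (herec : ∀ ω, ∀ j, 1 ≤ j → j ≤ k → e j ω = matCLM (Y j ω) (e (j - 1) ω))
    (hintk : Integrable (fun ω => ‖e k ω‖ ^ 2) μ) :
    (⨅ i, hherm.eigenvalues i) ^ k * ‖e₀‖ ^ 2 ≤ ∫ ω, ‖e k ω‖ ^ 2 ∂μ := by
  have hlam := iInf_eigenvalues_nonneg hint hherm
  have h := pow_mul_le_lintegral_norm_sq_of_rec hmeas hindep hident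
    (ofReal_iInf_eigenvalues_mul_le_lintegral hint hherm) he0 herec le_rfl
  rw [← ENNReal.ofReal_pow hlam, ← ENNReal.ofReal_mul (by positivity),
    ← ofReal_integral_eq_lintegral_ofReal hintk (ae_of_all _ fun ω => by positivity),
    ENNReal.ofReal_le_ofReal_iff (integral_nonneg fun ω => by positivity)] at h
  exact h
end

section
/- Let $\mathbf{Y}$ be a random symmetric $n \times n$ matrix satisfying $\mathbf{0} \preceq \mathbf{Y} \preceq \mathbf{I}$ almost surely (positive semidefinite contraction). Then $\|\mathbb{E}[\mathbf{Y} \otimes \mathbf{Y}]\| \le \|\mathbb{E}[\mathbf{Y}]\|$, where $\otimes$ is the Kronecker product and $\|\cdot\|$ the operator norm. -/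
/-!
Since `0 ⪯ Y ⪯ I`, the Kronecker product `(I - Y) ⊗ Y` is positive semidefinite, i.e.
`Y ⊗ Y ⪯ I ⊗ Y` almost surely, and taking expectations gives `0 ⪯ 𝔼[Y ⊗ Y] ⪯ I ⊗ 𝔼[Y]`.
On positive operators the norm is monotone in the Loewner order, being the supremum of the
Rayleigh quotient; finally `‖I ⊗ M‖ ≤ ‖M‖`, as `I ⊗ M` acts as `M` on each block of coordinates.
-/

open MeasureTheory ProbabilityTheory Matrix Metric
open scoped Kronecker

open scoped MatrixOrder

namespace ContinuousLinearMap

variable {𝕜 E : Type*} [RCLike 𝕜] [NormedAddCommGroup E] [InnerProductSpace 𝕜 E]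

theorem rayleighQuotient_le_of_le {T S : E →L[𝕜] E} (hTS : T ≤ S) (x : E) :
    T.rayleighQuotient x ≤ S.rayleighQuotient x := by
  have h := ((le_def T S).mp hTS).re_inner_nonneg_left x
  simp only [_root_.sub_apply, inner_sub_left, map_sub, sub_nonneg] at h
  exact div_le_div_of_nonneg_right h (by positivity)

theorem IsPositive.norm_le_norm_of_le {T S : E →L[𝕜] E} (hT : T.IsPositive) (hTS : T ≤ S) :
    ‖T‖ ≤ ‖S‖ := by
  rw [T.norm_eq_iSup_rayleighQuotient hT.isSymmetric]
  refine ciSup_le fun x => ?_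
  have hT0 : 0 ≤ T.rayleighQuotient x := div_nonneg (hT.re_inner_nonneg_left x) (by positivity)
  calc |T.rayleighQuotient x| = T.rayleighQuotient x := abs_of_nonneg hT0
    _ ≤ S.rayleighQuotient x := rayleighQuotient_le_of_le hTS x
    _ ≤ |S.rayleighQuotient x| := le_abs_self _
    _ ≤ ‖S‖ := S.rayleighQuotient_le_norm x

end ContinuousLinearMap

theorem EuclideanSpace.norm_sq_eq_sum_norm_sq_prod {𝕜 ι κ : Type*} [RCLike 𝕜] [Fintype ι]
    [Fintype κ] (y : EuclideanSpace 𝕜 (ι × κ)) :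
    ‖y‖ ^ 2 = ∑ i, ‖(WithLp.toLp 2 fun a => y (i, a) : EuclideanSpace 𝕜 κ)‖ ^ 2 := by
  simp [EuclideanSpace.norm_sq_eq, Fintype.sum_prod_type]

namespace Matrix

theorem sub_kronecker {R ι κ : Type*} [Ring R] (A B : Matrix ι ι R) (C : Matrix κ κ R) :
    (A - B) ⊗ₖ C = A ⊗ₖ C - B ⊗ₖ C := by
  ext
  simp [sub_mul]

theorem one_kronecker_mulVec_apply {R ι κ : Type*} [Semiring R] [Fintype ι] [DecidableEq ι]
    [Fintype κ] (M : Matrix κ κ R) (x : ι × κ → R) (i : ι) (a : κ) :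
    ((1 : Matrix ι ι R) ⊗ₖ M *ᵥ x) (i, a) = (M *ᵥ fun b => x (i, b)) a := by
  simp [mulVec, dotProduct, Fintype.sum_prod_type, one_apply, ite_mul]

theorem kronecker_le_kronecker_right {ι κ : Type*} [Fintype ι] [Fintype κ] {A B : Matrix ι ι ℝ}
    {C : Matrix κ κ ℝ} (hAB : A ≤ B) (hC : 0 ≤ C) : A ⊗ₖ C ≤ B ⊗ₖ C := by
  rw [le_iff, ← sub_kronecker]
  exact (le_iff.mp hAB).kronecker hC.posSemidef

variable {ι κ : Type*} [Fintype ι] [DecidableEq ι] [Fintype κ] [DecidableEq κ]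

theorem isPositive_toEuclideanCLM_iff {A : Matrix ι ι ℝ} :
    (toEuclideanCLM (𝕜 := ℝ) A).IsPositive ↔ A.PosSemidef := by
  rw [← ContinuousLinearMap.isPositive_toLinearMap_iff, coe_toEuclideanCLM_eq_toEuclideanLin,
    isPositive_toEuclideanLin_iff]

theorem toEuclideanCLM_le_toEuclideanCLM {A B : Matrix ι ι ℝ} (hAB : A ≤ B) :
    toEuclideanCLM (𝕜 := ℝ) A ≤ toEuclideanCLM (𝕜 := ℝ) B := by
  rw [ContinuousLinearMap.le_def, ← map_sub, isPositive_toEuclideanCLM_iff]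
  exact hAB

theorem opNorm_le_opNorm_of_le {A B : Matrix ι ι ℝ} (hA : 0 ≤ A) (hAB : A ≤ B) :
    opNorm A ≤ opNorm B :=
  (isPositive_toEuclideanCLM_iff.mpr hA.posSemidef).norm_le_norm_of_le
    (toEuclideanCLM_le_toEuclideanCLM hAB)

theorem opNorm_one_kronecker_le (M : Matrix κ κ ℝ) :
    opNorm ((1 : Matrix ι ι ℝ) ⊗ₖ M) ≤ opNorm M := by
  refine ContinuousLinearMap.opNorm_le_bound _ (norm_nonneg _) fun x => ?_
  set T := toEuclideanCLM (𝕜 := ℝ) M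
  set slice : ι → EuclideanSpace ℝ κ := fun i => WithLp.toLp 2 fun a => x (i, a)
  have hslice : ∀ i, (WithLp.toLp 2 fun a => toEuclideanCLM (𝕜 := ℝ) (1 ⊗ₖ M) x (i, a) :
      EuclideanSpace ℝ κ) = T (slice i) := by
    intro i
    ext a
    simp [T, slice, one_kronecker_mulVec_apply]
  refine le_of_pow_le_pow_left₀ two_ne_zero (mul_nonneg (norm_nonneg T) (norm_nonneg x)) ?_
  calc ‖toEuclideanCLM (𝕜 := ℝ) (1 ⊗ₖ M) x‖ ^ 2 = ∑ i, ‖T (slice i)‖ ^ 2 := by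
        simp only [EuclideanSpace.norm_sq_eq_sum_norm_sq_prod, hslice]
    _ ≤ ∑ i, (‖T‖ * ‖slice i‖) ^ 2 :=
        Finset.sum_le_sum fun i _ => pow_le_pow_left₀ (norm_nonneg _) (T.le_opNorm _) 2
    _ = (‖T‖ * ‖x‖) ^ 2 := by
        rw [mul_pow, EuclideanSpace.norm_sq_eq_sum_norm_sq_prod x, Finset.mul_sum]
        simp only [mul_pow, slice]

end Matrix

section Expectation

variable {Ω : Type*} [MeasurableSpace Ω] {μ : Measure Ω} {ι κ : Type*}

theorem dotProduct_Emat_mulVec [Fintype ι] {X : Ω → Matrix ι ι ℝ}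
    (hX : ∀ i j, Integrable (fun ω => X ω i j) μ) (x : ι → ℝ) :
    x ⬝ᵥ (Emat μ X *ᵥ x) = ∫ ω, x ⬝ᵥ (X ω *ᵥ x) ∂μ := by
  have hterm : ∀ i j, Integrable (fun ω => x i * (X ω i j * x j)) μ :=
    fun i j => ((hX i j).mul_const _).const_mul _
  simp only [dotProduct, mulVec, Emat, of_apply, Finset.mul_sum]
  rw [integral_finsetSum _ fun i _ => integrable_finsetSum _ fun j _ => hterm i j]
  refine Finset.sum_congr rfl fun i _ => ?_
  rw [integral_finsetSum _ fun j _ => hterm i j]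
  refine Finset.sum_congr rfl fun j _ => ?_
  rw [integral_const_mul, integral_mul_const]

theorem Emat_nonneg [Fintype ι] {X : Ω → Matrix ι ι ℝ}
    (hX : ∀ i j, Integrable (fun ω => X ω i j) μ) (hX0 : ∀ᵐ ω ∂μ, 0 ≤ X ω) :
    0 ≤ Emat μ X := by
  refine (PosSemidef.of_dotProduct_mulVec_nonneg ?_ fun x => ?_).nonneg
  · ext i j
    refine integral_congr_ae ?_
    filter_upwards [hX0] with ω hω
    exact hω.posSemidef.isHermitian.apply i j
  · rw [star_trivial, dotProduct_Emat_mulVec hX]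
    refine integral_nonneg_of_ae ?_
    filter_upwards [hX0] with ω hω
    simpa using hω.posSemidef.dotProduct_mulVec_nonneg x

theorem Emat_sub {X Z : Ω → Matrix ι κ ℝ} (hX : ∀ i j, Integrable (fun ω => X ω i j) μ)
    (hZ : ∀ i j, Integrable (fun ω => Z ω i j) μ) :
    Emat μ (fun ω => X ω - Z ω) = Emat μ X - Emat μ Z := by
  ext i j
  exact integral_sub (hX i j) (hZ i j)

theorem Emat_mono [Fintype ι] {X Z : Ω → Matrix ι ι ℝ}
    (hX : ∀ i j, Integrable (fun ω => X ω i j) μ) (hZ : ∀ i j, Integrable (fun ω => Z ω i j) μ)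
    (hXZ : ∀ᵐ ω ∂μ, X ω ≤ Z ω) : Emat μ X ≤ Emat μ Z := by
  rw [← sub_nonneg, ← Emat_sub hZ hX]
  exact Emat_nonneg (fun i j => (hZ i j).sub (hX i j)) (hXZ.mono fun ω h => sub_nonneg.mpr h)

theorem Emat_one_kronecker [DecidableEq ι] (X : Ω → Matrix κ κ ℝ) :
    Emat μ (fun ω => (1 : Matrix ι ι ℝ) ⊗ₖ X ω) = (1 : Matrix ι ι ℝ) ⊗ₖ Emat μ X := by
  ext p q
  exact integral_const_mul _ _

end Expectation

theorem stmt8_general {Ω : Type*} [MeasurableSpace Ω] (μ : Measure Ω)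
    {n : ℕ} (Y : Ω → Matrix (Fin n) (Fin n) ℝ)
    (hpsd : ∀ᵐ ω ∂μ, (Y ω).PosSemidef)
    (hcontr : ∀ᵐ ω ∂μ, ((1 : Matrix (Fin n) (Fin n) ℝ) - Y ω).PosSemidef)
    (hint : ∀ i j, Integrable (fun ω => Y ω i j) μ)
    (hint2 : ∀ i j, Integrable (fun ω => (Y ω ⊗ₖ Y ω) i j) μ) :
    opNorm (Emat μ fun ω => Y ω ⊗ₖ Y ω) ≤ opNorm (Emat μ Y) := by
  have hint_one : ∀ p q, Integrable (fun ω => ((1 : Matrix (Fin n) (Fin n) ℝ) ⊗ₖ Y ω) p q) μ :=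
    fun p q => (hint p.2 q.2).const_mul _
  have hYY_nonneg : ∀ᵐ ω ∂μ, 0 ≤ Y ω ⊗ₖ Y ω := hpsd.mono fun ω h => (h.kronecker h).nonneg
  have hYY_le : ∀ᵐ ω ∂μ, Y ω ⊗ₖ Y ω ≤ 1 ⊗ₖ Y ω := by
    filter_upwards [hpsd, hcontr] with ω hY hIY
    exact kronecker_le_kronecker_right (le_iff.mpr hIY) hY.nonneg
  calc opNorm (Emat μ fun ω => Y ω ⊗ₖ Y ω)
      ≤ opNorm (Emat μ fun ω => (1 : Matrix (Fin n) (Fin n) ℝ) ⊗ₖ Y ω) :=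
        opNorm_le_opNorm_of_le (Emat_nonneg hint2 hYY_nonneg) (Emat_mono hint2 hint_one hYY_le)
    _ = opNorm ((1 : Matrix (Fin n) (Fin n) ℝ) ⊗ₖ Emat μ Y) := by rw [Emat_one_kronecker]
    _ ≤ opNorm (Emat μ Y) := opNorm_one_kronecker_le _

/-- For a random symmetric psd contraction `Y` (i.e. `0 ⪯ Y ⪯ I` a.s.),
`‖𝔼[Y ⊗ Y]‖ ≤ ‖𝔼[Y]‖`. -/
theorem stmt8 {Ω : Type*} [MeasurableSpace Ω] (μ : Measure Ω) [IsProbabilityMeasure μ]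
    {n : ℕ} (Y : Ω → Matrix (Fin n) (Fin n) ℝ)
    (hpsd : ∀ᵐ ω ∂μ, (Y ω).PosSemidef)
    (hcontr : ∀ᵐ ω ∂μ, ((1 : Matrix (Fin n) (Fin n) ℝ) - Y ω).PosSemidef)
    (hint : ∀ i j, Integrable (fun ω => Y ω i j) μ)
    (hint2 : ∀ i j, Integrable (fun ω => (Y ω ⊗ₖ Y ω) i j) μ) :
    opNorm (Emat μ fun ω => Y ω ⊗ₖ Y ω) ≤ opNorm (Emat μ Y) :=
  stmt8_general μ Y hpsd hcontr hint hint2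
end
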